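/- arXiv:2006.02032 — 3 statements merged into one kernel-verified Lean document; each statement's English description precedes it below -/
import Mathlib

section
/- Let f : ℝⁿ × ℝᵐ → ℝ be continuously differentiable such that ∇_y f is Lipschitz in y with constant L_y (uniformly in x). Let 𝒴 ⊆ ℝᵐ be nonempty, closed, convex, ν > L_y, and let y₊ = P_𝒴(y + (1/ν)∇_y f(x, y)). Then f(x, y₊) − f(x, y) ≥ (ν/2)‖y₊ − y‖². -/
open scoped RealInnerProductSpace

/-- `q` is the Euclidean projection of `p` onto the set `s`. -/
def IsProjOn {E : Type*} [NormedAddCommGroup E] (s : Set E) (p q : E) : Prop :=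
  q ∈ s ∧ ∀ w ∈ s, ‖p - q‖ ≤ ‖p - w‖

/-!
The projection onto the convex set `Y` satisfies the variational inequality
`⟪p - y₊, y - y₊⟫ ≤ 0`, which for `p = y + ν⁻¹ ∇_y f(x, y)` says `ν ‖y₊ - y‖² ≤ ⟪∇_y f(x, y), y₊ - y⟫`.
The descent lemma for the `L_y`-Lipschitz gradient along the segment `[y, y₊] ⊆ Y` gives
`f(x, y₊) - f(x, y) ≥ ⟪∇_y f(x, y), y₊ - y⟫ - (L_y/2) ‖y₊ - y‖²`, and `ν > L_y` finishes.
-/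

open Set

variable {F : Type*} [NormedAddCommGroup F] [InnerProductSpace ℝ F]

theorem IsProjOn.inner_sub_sub_nonpos {s : Set F} (hs : Convex ℝ s) {p q : F}
    (h : IsProjOn s p q) {w : F} (hw : w ∈ s) : ⟪p - q, w - q⟫ ≤ 0 := by
  have : Nonempty s := ⟨⟨q, h.1⟩⟩
  refine (norm_eq_iInf_iff_real_inner_le_zero hs h.1).mp ?_ w hw
  exact le_antisymm (le_ciInf fun w => h.2 w w.2)
    (ciInf_le ⟨0, by rintro _ ⟨_, rfl⟩; exact norm_nonneg _⟩ (⟨q, h.1⟩ : s))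

theorem IsProjOn.mul_sq_norm_sub_le_inner {s : Set F} (hs : Convex ℝ s) {y g q : F} {ν : ℝ}
    (hν : 0 < ν) (hy : y ∈ s) (h : IsProjOn s (y + (1 / ν) • g) q) :
    ν * ‖q - y‖ ^ 2 ≤ ⟪g, q - y⟫ := by
  have hVI := h.inner_sub_sub_nonpos hs hy
  have hsplit : y + (1 / ν) • g - q = (1 / ν) • g - (q - y) := by abel
  rw [hsplit, ← neg_sub q y, inner_neg_right, inner_sub_left, real_inner_smul_left,
    real_inner_self_eq_norm_sq] at hVI
  rw [one_div, ← div_eq_inv_mul] at hVI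
  exact (le_div_iff₀' hν).mp (by linarith)

theorem Convex.inner_sub_le_sub_of_lipschitz_gradient [CompleteSpace F] {s : Set F}
    (hs : Convex ℝ s) {φ : F → ℝ} {g : F → F} {L : ℝ}
    (hφ : ∀ u ∈ s, HasGradientAt φ (g u) u)
    (hg : ∀ u ∈ s, ∀ v ∈ s, ‖g u - g v‖ ≤ L * ‖u - v‖) {y z : F} (hy : y ∈ s) (hz : z ∈ s) :
    ⟪g y, z - y⟫ - L / 2 * ‖z - y‖ ^ 2 ≤ φ z - φ y := by
  set d := z - y
  have hseg : ∀ t ∈ Icc (0 : ℝ) 1, y + t • d ∈ s := fun t ht => hs.add_smul_sub_mem hy hz ht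
  -- `ψ' ≥ 0` on `[0, 1]` by the Lipschitz bound, and `ψ 0 ≤ ψ 1` is the claim.
  let ψ : ℝ → ℝ := fun t => φ (y + t • d) - t * ⟪g y, d⟫ + L / 2 * t ^ 2 * ‖d‖ ^ 2
  have hψ : ∀ t ∈ Icc (0 : ℝ) 1,
      HasDerivAt ψ (⟪g (y + t • d) - g y, d⟫ + L * t * ‖d‖ ^ 2) t := by
    intro t ht
    have hline : HasDerivAt (fun t : ℝ => y + t • d) d t := by
      simpa using ((hasDerivAt_id t).smul_const d).const_add y
    have hφline : HasDerivAt (fun t : ℝ => φ (y + t • d)) ⟪g (y + t • d), d⟫ t := by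
      have := (hφ (y + t • d) (hseg t ht)).hasFDerivAt.comp_hasDerivAt t hline
      exact this
    refine ((hφline.sub ((hasDerivAt_id t).mul_const ⟪g y, d⟫)).add
      (((hasDerivAt_pow 2 t).const_mul (L / 2)).mul_const (‖d‖ ^ 2))).congr_deriv ?_
    simp only [inner_sub_left, one_mul]
    push_cast
    ring
  have hψ_nonneg : ∀ t ∈ Icc (0 : ℝ) 1, 0 ≤ ⟪g (y + t • d) - g y, d⟫ + L * t * ‖d‖ ^ 2 := by
    intro t ht
    have hgt : ‖g (y + t • d) - g y‖ ≤ L * t * ‖d‖ := by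
      simpa only [mul_assoc, add_sub_cancel_left, norm_smul, Real.norm_eq_abs, abs_of_nonneg ht.1] using
        hg _ (hseg t ht) y hy
    have hinner := (abs_le.mp ((abs_real_inner_le_norm _ _).trans
      (mul_le_mul_of_nonneg_right hgt (norm_nonneg d)))).1
    nlinarith
  have hmono : MonotoneOn ψ (Icc 0 1) :=
    monotoneOn_of_hasDerivWithinAt_nonneg (convex_Icc 0 1)
      (fun t ht => (hψ t ht).continuousAt.continuousWithinAt)
      (fun t ht => (hψ t (interior_subset ht)).hasDerivWithinAt)
      (fun t ht => hψ_nonneg t (interior_subset ht))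
  have hψ01 : φ y ≤ φ z - ⟪g y, d⟫ + L / 2 * ‖d‖ ^ 2 := by
    simpa [ψ, d] using
      hmono (left_mem_Icc.mpr zero_le_one) (right_mem_Icc.mpr zero_le_one) zero_le_one
  linarith

theorem stmt1_general {n m : ℕ}
    (f : EuclideanSpace ℝ (Fin n) → EuclideanSpace ℝ (Fin m) → ℝ)
    (gy : EuclideanSpace ℝ (Fin n) → EuclideanSpace ℝ (Fin m) → EuclideanSpace ℝ (Fin m))
    (Y : Set (EuclideanSpace ℝ (Fin m)))
    (hYcv : Convex ℝ Y)
    (Ly ν : ℝ)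
    (hgrad : ∀ x y, HasGradientAt (fun y' => f x y') (gy x y) y)
    (hLip : ∀ (x : EuclideanSpace ℝ (Fin n)), ∀ y₁ ∈ Y, ∀ y₂ ∈ Y,
      ‖gy x y₁ - gy x y₂‖ ≤ Ly * ‖y₁ - y₂‖)
    (hν : Ly < ν)
    (x : EuclideanSpace ℝ (Fin n)) (y yp : EuclideanSpace ℝ (Fin m))
    (hy : y ∈ Y)
    (hproj : IsProjOn Y (y + (1 / ν) • gy x y) yp) :
    f x yp - f x y ≥ (ν / 2) * ‖yp - y‖ ^ 2 := by
  rcases eq_or_ne yp y with rfl | hne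
  · simp
  have hLy : 0 ≤ Ly :=
    nonneg_of_mul_nonneg_left ((norm_nonneg _).trans (hLip x yp hproj.1 y hy))
      (norm_pos_iff.mpr (sub_ne_zero.mpr hne))
  have hstep := hproj.mul_sq_norm_sub_le_inner hYcv (hLy.trans_lt hν) hy
  have hdescent := hYcv.inner_sub_le_sub_of_lipschitz_gradient
    (fun u _ => hgrad x u) (hLip x) hy hproj.1
  nlinarith [mul_le_mul_of_nonneg_right hν.le (sq_nonneg ‖yp - y‖)]

theorem stmt1 {n m : ℕ}
    (f : EuclideanSpace ℝ (Fin n) → EuclideanSpace ℝ (Fin m) → ℝ)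
    (gy : EuclideanSpace ℝ (Fin n) → EuclideanSpace ℝ (Fin m) → EuclideanSpace ℝ (Fin m))
    (Y : Set (EuclideanSpace ℝ (Fin m)))
    (hYne : Y.Nonempty) (hYcl : IsClosed Y) (hYcv : Convex ℝ Y)
    (Ly ν : ℝ)
    (hgrad : ∀ x y, HasGradientAt (fun y' => f x y') (gy x y) y)
    (hLip : ∀ (x : EuclideanSpace ℝ (Fin n)), ∀ y₁ ∈ Y, ∀ y₂ ∈ Y,
      ‖gy x y₁ - gy x y₂‖ ≤ Ly * ‖y₁ - y₂‖)
    (hν : Ly < ν)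
    (x : EuclideanSpace ℝ (Fin n)) (y yp : EuclideanSpace ℝ (Fin m))
    (hy : y ∈ Y)
    (hproj : IsProjOn Y (y + (1 / ν) • gy x y) yp) :
    f x yp - f x y ≥ (ν / 2) * ‖yp - y‖ ^ 2 :=
  stmt1_general f gy Y hYcv Ly ν hgrad hLip hν x y yp hy hproj
end

section
/- Let f be differentiable with ∇_y f being L_y-Lipschitz in y and L₁₂-Lipschitz in x, and μ-strongly concave in y. Let y_{k+1} = P_𝒴(y_k + ρ∇_y f(x_{k+1}, y_k)) and y_k = P_𝒴(y_{k−1} + ρ∇_y f(x_k, y_{k−1})) with ρ > 0. Then f(x_{k+1}, y_{k+1}) − f(x_{k+1}, y_k) ≤ (L₁₂²ρ/2)‖x_{k+1} − x_k‖² − (μ/2 − 1/ρ)‖y_{k+1} − y_k‖² − (μ − 1/(2ρ) − ρL_y²/2)‖y_k − y_{k−1}‖². -/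
open scoped RealInnerProductSpace

private lemma proj_inner_le {E : Type*} [NormedAddCommGroup E] [InnerProductSpace ℝ E]
    {s : Set E} (hcv : Convex ℝ s) {p q : E} (h : IsProjOn s p q) :
    ∀ w ∈ s, (⟪p - q, w - q⟫ : ℝ) ≤ 0 := by
  have hiInf : ‖p - q‖ = ⨅ w : s, ‖p - w‖ := by
    haveI : Nonempty s := ⟨⟨q, h.1⟩⟩
    refine le_antisymm (le_ciInf fun w => h.2 w w.2) ?_
    exact ciInf_le ⟨0, fun _ ⟨_, hh⟩ => hh ▸ norm_nonneg _⟩ (⟨q, h.1⟩ : s)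
  exact (norm_eq_iInf_iff_real_inner_le_zero hcv h.1).1 hiInf

private lemma young (ρ : ℝ) (hρ : 0 < ρ) (a b : ℝ) :
    a * b ≤ ρ / 2 * a ^ 2 + 1 / (2 * ρ) * b ^ 2 := by
  have h : ρ / 2 * a ^ 2 + 1 / (2 * ρ) * b ^ 2 - a * b = (ρ * a - b) ^ 2 / (2 * ρ) := by
    field_simp; ring
  have h2 : (0:ℝ) ≤ (ρ * a - b) ^ 2 / (2 * ρ) :=
    div_nonneg (sq_nonneg _) (by linarith)
  linarith

theorem stmt14 {n m : ℕ}
    (f : EuclideanSpace ℝ (Fin n) → EuclideanSpace ℝ (Fin m) → ℝ)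
    (gy : EuclideanSpace ℝ (Fin n) → EuclideanSpace ℝ (Fin m) → EuclideanSpace ℝ (Fin m))
    (Y : Set (EuclideanSpace ℝ (Fin m)))
    (hYne : Y.Nonempty) (hYcl : IsClosed Y) (hYcv : Convex ℝ Y)
    (Ly L₁₂ μ ρ : ℝ) (hμ : 0 < μ) (hρ : 0 < ρ)
    (hgrad : ∀ x y, HasGradientAt (fun y' => f x y') (gy x y) y)
    (hLy : ∀ x y₁ y₂, ‖gy x y₁ - gy x y₂‖ ≤ Ly * ‖y₁ - y₂‖)
    (hL12 : ∀ x₁ x₂ y, ‖gy x₁ y - gy x₂ y‖ ≤ L₁₂ * ‖x₁ - x₂‖)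
    (hsc : ∀ x y y', f x y' ≤ f x y + ⟪gy x y, y' - y⟫ - (μ / 2) * ‖y' - y‖ ^ 2)
    (xk xk1 : EuclideanSpace ℝ (Fin n)) (ykm yk yk1 : EuclideanSpace ℝ (Fin m))
    (hykm : ykm ∈ Y)
    (hstep1 : IsProjOn Y (ykm + ρ • gy xk ykm) yk)
    (hstep2 : IsProjOn Y (yk + ρ • gy xk1 yk) yk1) :
    f xk1 yk1 - f xk1 yk ≤
      (L₁₂ ^ 2 * ρ / 2) * ‖xk1 - xk‖ ^ 2 - (μ / 2 - 1 / ρ) * ‖yk1 - yk‖ ^ 2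
        - (μ - 1 / (2 * ρ) - ρ * Ly ^ 2 / 2) * ‖yk - ykm‖ ^ 2 := by
  set u := yk1 - yk with hu
  set v := yk - ykm with hv
  -- strong concavity at (xk1, yk)
  have hsc1 : f xk1 yk1 - f xk1 yk ≤ ⟪gy xk1 yk, u⟫ - μ / 2 * ‖u‖ ^ 2 := by
    have := hsc xk1 yk yk1
    rw [← hu] at this
    linarith
  -- decomposition of the gradient inner product
  have hdecomp : (⟪gy xk1 yk, u⟫ : ℝ) =
      ⟪gy xk1 yk - gy xk yk, u⟫ + ⟪gy xk yk - gy xk ykm, v⟫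
        + ⟪gy xk yk - gy xk ykm, u - v⟫ + ⟪gy xk ykm, u⟫ := by
    simp only [inner_sub_left, inner_sub_right]; ring
  -- I1 : Lipschitz in x + Young
  have hI1 : (⟪gy xk1 yk - gy xk yk, u⟫ : ℝ) ≤
      ρ / 2 * (L₁₂ ^ 2 * ‖xk1 - xk‖ ^ 2) + 1 / (2 * ρ) * ‖u‖ ^ 2 := by
    have h1 : (⟪gy xk1 yk - gy xk yk, u⟫ : ℝ) ≤ ‖gy xk1 yk - gy xk yk‖ * ‖u‖ :=
      real_inner_le_norm _ _
    have h2 : ‖gy xk1 yk - gy xk yk‖ * ‖u‖ ≤ (L₁₂ * ‖xk1 - xk‖) * ‖u‖ :=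
      mul_le_mul_of_nonneg_right (hL12 _ _ _) (norm_nonneg _)
    have h3 := young ρ hρ (L₁₂ * ‖xk1 - xk‖) ‖u‖
    nlinarith [h3]
  -- monotonicity from strong concavity
  have hI2a : (⟪gy xk yk - gy xk ykm, v⟫ : ℝ) ≤ -μ * ‖v‖ ^ 2 := by
    have h1 := hsc xk yk ykm
    have h2 := hsc xk ykm yk
    have e1 : ykm - yk = -v := by rw [hv]; abel
    rw [e1, inner_neg_right, norm_neg] at h1
    rw [← hv] at h2
    simp only [inner_sub_left]
    linarith
  -- I2b : Lipschitz in y + Young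
  have hI2b : (⟪gy xk yk - gy xk ykm, u - v⟫ : ℝ) ≤
      ρ / 2 * (Ly ^ 2 * ‖v‖ ^ 2) + 1 / (2 * ρ) * ‖u - v‖ ^ 2 := by
    have h1 : (⟪gy xk yk - gy xk ykm, u - v⟫ : ℝ) ≤ ‖gy xk yk - gy xk ykm‖ * ‖u - v‖ :=
      real_inner_le_norm _ _
    have h2 : ‖gy xk yk - gy xk ykm‖ * ‖u - v‖ ≤ (Ly * ‖v‖) * ‖u - v‖ :=
      mul_le_mul_of_nonneg_right (by rw [hv]; exact hLy _ _ _) (norm_nonneg _)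
    have h3 := young ρ hρ (Ly * ‖v‖) ‖u - v‖
    nlinarith [h3]
  -- projection optimality at step k, tested at yk1 ∈ Y
  have hproj : ρ * ⟪gy xk ykm, u⟫ ≤ (⟪v, u⟫ : ℝ) := by
    have h1 := proj_inner_le hYcv hstep1 yk1 hstep2.1
    have e : ykm + ρ • gy xk ykm - yk = -v + ρ • gy xk ykm := by rw [hv]; abel
    rw [e, ← hu, inner_add_left, real_inner_smul_left, inner_neg_left] at h1
    linarith
  -- polarization identity
  have hpol : (⟪v, u⟫ : ℝ) = (‖u‖ ^ 2 + ‖v‖ ^ 2 - ‖u - v‖ ^ 2) / 2 := by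
    have := norm_sub_sq_real u v
    rw [real_inner_comm] at this
    linarith
  have hproj' : (⟪gy xk ykm, u⟫ : ℝ) ≤
      (‖u‖ ^ 2 + ‖v‖ ^ 2 - ‖u - v‖ ^ 2) / (2 * ρ) := by
    rw [le_div_iff₀ (by linarith : (0:ℝ) < 2 * ρ)]
    rw [hpol] at hproj
    nlinarith [hproj]
  -- combine everything
  calc f xk1 yk1 - f xk1 yk
      ≤ ρ / 2 * (L₁₂ ^ 2 * ‖xk1 - xk‖ ^ 2) + 1 / (2 * ρ) * ‖u‖ ^ 2
        + (-μ * ‖v‖ ^ 2)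
        + (ρ / 2 * (Ly ^ 2 * ‖v‖ ^ 2) + 1 / (2 * ρ) * ‖u - v‖ ^ 2)
        + (‖u‖ ^ 2 + ‖v‖ ^ 2 - ‖u - v‖ ^ 2) / (2 * ρ)
        - μ / 2 * ‖u‖ ^ 2 := by linarith
    _ = (L₁₂ ^ 2 * ρ / 2) * ‖xk1 - xk‖ ^ 2 - (μ / 2 - 1 / ρ) * ‖u‖ ^ 2
        - (μ - 1 / (2 * ρ) - ρ * Ly ^ 2 / 2) * ‖v‖ ^ 2 := by
        field_simp
        ring
end

section
/- Let f : ℝⁿ × ℝᵐ → ℝ be θ-strongly convex in x for each fixed y, with ∇ₓf being Lₓ-Lipschitz in x and L₂₁-Lipschitz in y. Let 𝒳 be nonempty closed convex, ζ > 0, and x_{k+1} = P_𝒳(x_k − ζ∇ₓf(x_k, y_k)), x_{k+2} = P_𝒳(x_{k+1} − ζ∇ₓf(x_{k+1}, y_{k+1})). Then f(x_{k+2}, y_{k+1}) − f(x_{k+1}, y_{k+1}) ≥ −(L₂₁²ζ/2)‖y_{k+1} − y_k‖² + (θ/2 − 1/ζ)‖x_{k+2} − x_{k+1}‖² + (θ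 − 1/(2ζ) − ζLₓ²/2)‖x_{k+1} − x_k‖². -/
open scoped RealInnerProductSpace

/-- Variational inequality for Euclidean projection onto a convex set. -/
lemma isProjOn_inner_le {E : Type*} [NormedAddCommGroup E] [InnerProductSpace ℝ E]
    {X : Set E} (hcv : Convex ℝ X) {p q : E} (h : IsProjOn X p q)
    {w : E} (hw : w ∈ X) : ⟪p - q, w - q⟫ ≤ 0 := by
  haveI : Nonempty X := ⟨⟨q, h.1⟩⟩
  have hinf : ‖p - q‖ = ⨅ z : X, ‖p - (z : E)‖ := by
    refine le_antisymm (le_ciInf fun z => h.2 z z.2) ?_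
    exact ciInf_le ⟨0, Set.forall_mem_range.2 fun z => norm_nonneg _⟩ (⟨q, h.1⟩ : X)
  exact (norm_eq_iInf_iff_real_inner_le_zero hcv h.1).1 hinf w hw

private lemma scalar_step (θ ζ Lx L21 s t w D G0b f1 f2 Pab : ℝ) (hζ : 0 < ζ)
    (h : f2 - f1 ≥ θ / 2 * t ^ 2 + θ * s ^ 2 - Lx * s * w - L21 * D * t + G0b)
    (hG : ζ * G0b ≥ -Pab)
    (hP : 2 * Pab = s ^ 2 + t ^ 2 - w ^ 2) :
    f2 - f1 ≥ -(L21 ^ 2 * ζ / 2) * D ^ 2 + (θ / 2 - 1 / ζ) * t ^ 2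
      + (θ - 1 / (2 * ζ) - ζ * Lx ^ 2 / 2) * s ^ 2 := by
  have hζ' : ζ ≠ 0 := hζ.ne'
  have hG' : G0b ≥ -Pab / ζ := by
    rw [ge_iff_le, div_le_iff₀ hζ]; linarith [hG]
  have key : θ / 2 * t ^ 2 + θ * s ^ 2 - Lx * s * w - L21 * D * t + (-Pab / ζ)
      - (-(L21 ^ 2 * ζ / 2) * D ^ 2 + (θ / 2 - 1 / ζ) * t ^ 2
        + (θ - 1 / (2 * ζ) - ζ * Lx ^ 2 / 2) * s ^ 2)
      = 1 / (2 * ζ) * ((w - ζ * Lx * s) ^ 2 + (t - ζ * L21 * D) ^ 2) := by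
    have hPab : Pab = (s ^ 2 + t ^ 2 - w ^ 2) / 2 := by linarith
    rw [hPab]; field_simp; ring
  nlinarith [mul_nonneg (by positivity : (0:ℝ) ≤ 1 / (2 * ζ))
    (by positivity : (0:ℝ) ≤ (w - ζ * Lx * s) ^ 2 + (t - ζ * L21 * D) ^ 2)]

theorem stmt15 {n m : ℕ}
    (f : EuclideanSpace ℝ (Fin n) → EuclideanSpace ℝ (Fin m) → ℝ)
    (gx : EuclideanSpace ℝ (Fin n) → EuclideanSpace ℝ (Fin m) → EuclideanSpace ℝ (Fin n))
    (X : Set (EuclideanSpace ℝ (Fin n)))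
    (hXne : X.Nonempty) (hXcl : IsClosed X) (hXcv : Convex ℝ X)
    (Lx L₂₁ θ ζ : ℝ) (hθ : 0 < θ) (hζ : 0 < ζ)
    (hgrad : ∀ x y, HasGradientAt (fun x' => f x' y) (gx x y) x)
    (hLx : ∀ x₁ x₂ y, ‖gx x₁ y - gx x₂ y‖ ≤ Lx * ‖x₁ - x₂‖)
    (hL21 : ∀ x y₁ y₂, ‖gx x y₁ - gx x y₂‖ ≤ L₂₁ * ‖y₁ - y₂‖)
    (hscv : ∀ x x' y, f x' y ≥ f x y + ⟪gx x y, x' - x⟫ + (θ / 2) * ‖x' - x‖ ^ 2)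
    (xk xk1 xk2 : EuclideanSpace ℝ (Fin n)) (yk yk1 : EuclideanSpace ℝ (Fin m))
    (hxk : xk ∈ X)
    (hstep1 : IsProjOn X (xk - ζ • gx xk yk) xk1)
    (hstep2 : IsProjOn X (xk1 - ζ • gx xk1 yk1) xk2) :
    f xk2 yk1 - f xk1 yk1 ≥
      -(L₂₁ ^ 2 * ζ / 2) * ‖yk1 - yk‖ ^ 2 + (θ / 2 - 1 / ζ) * ‖xk2 - xk1‖ ^ 2
        + (θ - 1 / (2 * ζ) - ζ * Lx ^ 2 / 2) * ‖xk1 - xk‖ ^ 2 := by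
  set g₀ := gx xk yk with hg0
  set g₀' := gx xk yk1 with hg0'
  set g₁ := gx xk1 yk1 with hg1
  set a := xk1 - xk with ha
  set b := xk2 - xk1 with hb
  set s := ‖a‖ with hs
  set t := ‖b‖ with ht
  set w := ‖b - a‖ with hw
  set D := ‖yk1 - yk‖ with hD
  -- strong convexity from xk1 to xk2
  have hA : f xk2 yk1 - f xk1 yk1 ≥ ⟪g₁, b⟫ + θ / 2 * t ^ 2 := by
    have := hscv xk1 xk2 yk1
    rw [← hb] at this; linarith
  -- variational inequality of step 1 at xk2
  have hB : ζ * ⟪g₀, b⟫ ≥ -⟪a, b⟫ := by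
    have h1 : ⟪xk - ζ • g₀ - xk1, xk2 - xk1⟫ ≤ 0 :=
      isProjOn_inner_le hXcv hstep1 hstep2.1
    have h2 : ⟪xk - ζ • g₀ - xk1, xk2 - xk1⟫ = -⟪a, b⟫ - ζ * ⟪g₀, b⟫ := by
      rw [← hb]
      simp only [inner_sub_left, real_inner_smul_left, ha, inner_sub_left]
      ring
    rw [h2] at h1; linarith
  -- strong monotonicity from strong convexity (both directions, at yk1)
  have hmono : ⟪g₁ - g₀', a⟫ ≥ θ * s ^ 2 := by
    have h1 := hscv xk xk1 yk1
    have h2 := hscv xk1 xk yk1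
    have e1 : xk - xk1 = -a := by rw [ha]; abel
    rw [← ha] at h1
    rw [e1, inner_neg_right, norm_neg, ← hs] at h2
    rw [← hs] at h1
    have : ⟪g₁ - g₀', a⟫ = ⟪g₁, a⟫ - ⟪g₀', a⟫ := by rw [inner_sub_left]
    rw [this]; linarith
  -- Cauchy–Schwarz + Lipschitz bounds
  have hC1 : ⟪g₁ - g₀', b - a⟫ ≥ -(Lx * s * w) := by
    have h1 := abs_real_inner_le_norm (g₁ - g₀') (b - a)
    have h2 : ‖g₁ - g₀'‖ ≤ Lx * s := by
      have := hLx xk1 xk yk1; rw [← ha, ← hs] at this; exact this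
    have h3 : ‖g₁ - g₀'‖ * ‖b - a‖ ≤ Lx * s * w := by
      rw [← hw]; exact mul_le_mul_of_nonneg_right h2 (norm_nonneg _)
    have := abs_le.1 h1
    linarith
  have hC3 : ⟪g₀' - g₀, b⟫ ≥ -(L₂₁ * D * t) := by
    have h1 := abs_real_inner_le_norm (g₀' - g₀) b
    have h2 : ‖g₀' - g₀‖ ≤ L₂₁ * D := by
      have := hL21 xk yk1 yk; rw [← hD] at this; exact this
    have h3 : ‖g₀' - g₀‖ * ‖b‖ ≤ L₂₁ * D * t := by
      rw [← ht]; exact mul_le_mul_of_nonneg_right h2 (norm_nonneg _)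
    have := abs_le.1 h1
    linarith
  -- decomposition of ⟪g₁, b⟫
  have hdec : ⟪g₁, b⟫ = ⟪g₁ - g₀', b - a⟫ + ⟪g₁ - g₀', a⟫ + ⟪g₀' - g₀, b⟫ + ⟪g₀, b⟫ := by
    simp only [inner_sub_left, inner_sub_right]; ring
  -- polarization identity
  have hP : 2 * ⟪a, b⟫ = s ^ 2 + t ^ 2 - w ^ 2 := by
    have := norm_sub_sq_real b a
    rw [← hw, ← ht, ← hs, real_inner_comm a b] at this
    linarith
  -- assemble
  have hmain : f xk2 yk1 - f xk1 yk1 ≥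
      θ / 2 * t ^ 2 + θ * s ^ 2 - Lx * s * w - L₂₁ * D * t + ⟪g₀, b⟫ := by
    rw [hdec] at hA; linarith
  exact scalar_step θ ζ Lx L₂₁ s t w D ⟪g₀, b⟫ (f xk1 yk1) (f xk2 yk1) ⟪a, b⟫
    hζ hmain hB hP
end
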